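/- arXiv:math/0510216 — 2 statements merged into one kernel-verified Lean document; each statement's English description precedes it below -/
import Mathlib

section
/- The characteristic polynomial of the Coxeter transformation of the Dynkin diagram Aₙ is λⁿ + λⁿ⁻¹ + ⋯ + λ + 1 = (λⁿ⁺¹ − 1)/(λ − 1). -/
/-!
Steinberg's trick: let `U` be the unitriangular part of the Cartan matrix `K` with respect to the
order in which the reflections are multiplied (`U i j = K i j` when `i` precedes `j`). Then
`U * cox = U - K` and `det U = 1`, so `charpoly cox = det (X • U - (U - K)) = det ((X - 1) • U + K)`.
For the path graph this matrix is tridiagonal with diagonal `X + 1`, and of two opposite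
off-diagonal entries one is `-X` and the other `-1`, depending on which endpoint comes first. Either
way their product is `X`, so expanding along the first row gives `Dₙ₊₂ = (X + 1) Dₙ₊₁ - X Dₙ` for the
determinants, which the geometric sums solve.
-/

open Polynomial Matrix

noncomputable section
open scoped Classical

/-- The (generalized) Cartan matrix of a simply-laced graph `G`:
`2` on the diagonal, `-1` for adjacent vertices, `0` otherwise. -/
def cartanOf (R : Type*) [CommRing R] {V : Type*} (G : SimpleGraph V) : Matrix V V R :=
  fun i j => if i = j then 2 else if G.Adj i j then -1 else 0

/-- The matrix of the simple reflection `σ_i(x) = x - φ_i(x) α_i` associated to the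
`i`-th row of a generalized Cartan matrix `K`. -/
def reflOf (R : Type*) [CommRing R] {V : Type*} (K : Matrix V V R) (i : V) : Matrix V V R :=
  fun j k => (if j = k then 1 else 0) - (if j = i then K i k else 0)

/-- The Coxeter transformation associated to the generalized Cartan matrix `K`:
the product of all simple reflections taken in the order given by the list `L`. -/
def coxeterOf (R : Type*) [CommRing R] {V : Type*} [Fintype V] [DecidableEq V]
    (K : Matrix V V R) (L : List V) : Matrix V V R :=
  (L.map (reflOf R K)).prod

/-- `L` is an enumeration of the (finite) vertex set: each vertex occurs exactly once. -/
def IsEnum {V : Type*} (L : List V) : Prop := L.Nodup ∧ ∀ v, v ∈ L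

end

theorem List.Nodup.pair_sublist_swap_iff {α : Type*} {l : List α} {a b : α} (hl : l.Nodup)
    (ha : a ∈ l) (hb : b ∈ l) (hab : a ≠ b) : [b, a].Sublist l ↔ ¬ [a, b].Sublist l := by
  induction l with
  | nil => simp at ha
  | cons c l ih =>
    obtain ⟨hc, hl⟩ := List.nodup_cons.mp hl
    simp only [List.sublist_cons_iff, List.cons.injEq, List.singleton_sublist, and_true,
      existsAndEq]
    rcases List.mem_cons.mp ha with rfl | hal <;> rcases List.mem_cons.mp hb with rfl | hbl
    · exact absurd rfl hab
    · have : ¬ [b, a].Sublist l := fun h => hc (h.subset (by simp))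
      simp [this, hbl, hab.symm]
    · have : ¬ [a, b].Sublist l := fun h => hc (h.subset (by simp))
      simp [this, hal, hab]
    · have hbc : b ≠ c := fun h => hc (h ▸ hbl)
      have hac : a ≠ c := fun h => hc (h ▸ hal)
      simp [hbc, hac, ih hl hal hbl]

namespace Matrix

variable {R : Type*} [CommRing R] {V : Type*} [DecidableEq V]

def unitriangularPart (K : Matrix V V R) (L : List V) : Matrix V V R :=
  fun i j => if i = j then 1 else if [i, j].Sublist L then K i j else 0

def coordProj (L : List V) : Matrix V V R := diagonal fun i => if i ∈ L then 1 else 0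

variable (K : Matrix V V R)

theorem unitriangularPart_nil : K.unitriangularPart [] = 1 := by
  ext i j
  rcases eq_or_ne i j with rfl | h <;> simp [unitriangularPart, *]

theorem coordProj_cons {v : V} {L : List V} (hv : v ∉ L) :
    (coordProj (v :: L) : Matrix V V R) = single v v 1 + coordProj L := by
  rw [coordProj, coordProj, ← diagonal_single, diagonal_add]
  congr 1
  ext i
  rcases eq_or_ne i v with rfl | hi <;> simp [*]

theorem one_sub_coordProj (L : List V) :
    1 - (coordProj L : Matrix V V R) = diagonal fun i => if i ∈ L then 0 else 1 := by
  ext i j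
  rcases eq_or_ne i j with rfl | hij
  · by_cases hi : i ∈ L <;> simp [coordProj, hi]
  · simp [coordProj, hij]

theorem coordProj_of_forall_mem {L : List V} (hL : ∀ v, v ∈ L) :
    (coordProj L : Matrix V V R) = 1 := by
  simp [coordProj, hL]

variable [Fintype V]

theorem diagonal_mul_single_of_eq_zero {n : Type*} [DecidableEq n] {d : V → R} {v : V}
    (hd : d v = 0) (j : n) (c : R) : diagonal d * single v j c = 0 := by
  ext i k
  rcases eq_or_ne i v with rfl | hi
  · simp [hd]
  · simp [single_apply_of_row_ne hi.symm]

theorem det_one_add_single_mul (v : V) (A : Matrix V V R) :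
    (1 + single v v 1 * A).det = 1 + A v v := by
  have : (single v v 1 : Matrix V V R) = single v () (1 : R) * single () v (1 : R) := by simp
  rw [this, Matrix.mul_assoc, det_one_add_mul_comm, single_mul_mul_single, det_unique]
  simp

theorem unitriangularPart_cons {v : V} {L : List V} (hv : v ∉ L) :
    K.unitriangularPart (v :: L) = K.unitriangularPart L + single v v 1 * K * coordProj L := by
  ext i j
  have hvj : ¬ [v, j].Sublist L := fun h => hv (h.subset (by simp))
  by_cases hij : i = j <;> by_cases hi : i = v <;>
    simp_all [unitriangularPart, coordProj, List.sublist_cons_iff]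

theorem unitriangularPart_mul_single {v : V} {L : List V} (hv : v ∉ L) :
    K.unitriangularPart L * single v v 1 = single v v 1 := by
  ext i j
  rcases eq_or_ne j v with rfl | hj
  · have hij : ¬ [i, j].Sublist L := fun h => hv (h.subset (by simp))
    rcases eq_or_ne i j with rfl | hi
    · simp [unitriangularPart]
    · simp [unitriangularPart, single_apply_of_row_ne hi.symm, hi, hij]
  · simp [single_apply_of_col_ne _ _ hj.symm, hj]

theorem det_unitriangularPart {L : List V} (hL : L.Nodup) : (K.unitriangularPart L).det = 1 := by
  induction L with
  | nil => rw [unitriangularPart_nil, det_one]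
  | cons v L ih =>
    obtain ⟨hv, hL⟩ := List.nodup_cons.mp hL
    have hfactor : K.unitriangularPart (v :: L)
        = K.unitriangularPart L * (1 + single v v 1 * (K * coordProj L)) := by
      rw [unitriangularPart_cons K hv, mul_add, mul_one, ← mul_assoc, ← mul_assoc,
        unitriangularPart_mul_single K hv, mul_assoc]
    rw [hfactor, det_mul, ih hL, det_one_add_single_mul]
    simp [coordProj, hv]

end Matrix

section Coxeter

variable {R : Type*} [CommRing R] {V : Type*} [Fintype V] [DecidableEq V] (K : Matrix V V R)

theorem reflOf_eq_one_sub_single_mul (v : V) : reflOf R K v = 1 - single v v 1 * K := by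
  ext i j
  rcases eq_or_ne i v with rfl | h
  · simp [reflOf, one_apply]
  · simp [reflOf, one_apply, h]

theorem coxeterOf_cons (v : V) (L : List V) :
    coxeterOf R K (v :: L) = reflOf R K v * coxeterOf R K L := by
  simp [coxeterOf]

theorem diagonal_mul_coxeterOf_of_eq_zero {d : V → R} {L : List V} (hd : ∀ v ∈ L, d v = 0) :
    diagonal d * coxeterOf R K L = diagonal d := by
  induction L with
  | nil => simp [coxeterOf]
  | cons v L ih =>
    rw [coxeterOf_cons, reflOf_eq_one_sub_single_mul, ← mul_assoc, mul_sub, mul_one,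
      ← mul_assoc, diagonal_mul_single_of_eq_zero (hd v List.mem_cons_self), zero_mul, sub_zero,
      ih fun w hw => hd w (List.mem_cons_of_mem v hw)]

theorem unitriangularPart_mul_coxeterOf {L : List V} (hL : L.Nodup) :
    K.unitriangularPart L * coxeterOf R K L = K.unitriangularPart L - coordProj L * K := by
  induction L with
  | nil => simp [coxeterOf, unitriangularPart_nil, coordProj]
  | cons v L ih =>
    obtain ⟨hv, hL⟩ := List.nodup_cons.mp hL
    set E : Matrix V V R := single v v 1
    have hPE : coordProj L * E = 0 := diagonal_mul_single_of_eq_zero (by simp [hv]) _ _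
    have hrefl : K.unitriangularPart (v :: L) * reflOf R K v
        = K.unitriangularPart L - E * K * (1 - coordProj L) := by
      rw [unitriangularPart_cons K hv, reflOf_eq_one_sub_single_mul, add_mul, mul_sub, mul_sub,
        ← mul_assoc, unitriangularPart_mul_single K hv]
      simp only [mul_assoc, mul_one]
      rw [← mul_assoc (coordProj L), hPE, zero_mul, mul_zero, mul_zero]
      noncomm_ring
    have hfix : (1 - coordProj L) * coxeterOf R K L = 1 - coordProj L := by
      rw [one_sub_coordProj]
      exact diagonal_mul_coxeterOf_of_eq_zero K fun w hw => if_pos hw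
    rw [coxeterOf_cons, ← mul_assoc, hrefl, sub_mul, ih hL, mul_assoc, hfix,
      unitriangularPart_cons K hv, coordProj_cons hv]
    noncomm_ring

theorem charpoly_coxeterOf {L : List V} (hL : IsEnum L) :
    (coxeterOf R K L).charpoly
      = ((X - 1 : R[X]) • (K.unitriangularPart L).map C + K.map C).det := by
  set U := K.unitriangularPart L
  have hUcox : U * coxeterOf R K L = U - K := by
    rw [unitriangularPart_mul_coxeterOf K hL.1, coordProj_of_forall_mem hL.2, one_mul]
  have hmul : U.map C * charmatrix (coxeterOf R K L) = (X - 1 : R[X]) • U.map C + K.map C := by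
    rw [charmatrix, mul_sub, RingHom.mapMatrix_apply, ← Matrix.map_mul, hUcox,
      Matrix.map_sub _ (map_sub C), scalar_apply, ← smul_eq_mul_diagonal, sub_smul, one_smul]
    abel
  have hdetU : (U.map (C : R →+* R[X])).det = 1 := by
    rw [← RingHom.mapMatrix_apply, ← RingHom.map_det, det_unitriangularPart K hL.1, map_one]
  rw [charpoly, ← hmul, det_mul, hdetU, one_mul]

end Coxeter

theorem det_eq_of_head_tridiagonal {R : Type*} [CommRing R] {n : ℕ}
    (T : Matrix (Fin (n + 2)) (Fin (n + 2)) R)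
    (hrow : ∀ j : Fin n, T 0 j.succ.succ = 0) (hcol : ∀ i : Fin n, T i.succ.succ 0 = 0) :
    T.det = T 0 0 * (T.submatrix Fin.succ Fin.succ).det
      - T 0 1 * T 1 0 * ((T.submatrix Fin.succ Fin.succ).submatrix Fin.succ Fin.succ).det := by
  have hminor : (T.submatrix Fin.succ (Fin.succAbove 1)).det
      = T 1 0 * ((T.submatrix Fin.succ Fin.succ).submatrix Fin.succ Fin.succ).det := by
    rw [det_succ_column_zero, Fin.sum_univ_succ, Finset.sum_eq_zero fun i _ => by simp [hcol]]
    simp [Function.comp_def]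
  rw [det_succ_row_zero, Fin.sum_univ_succ, Fin.sum_univ_succ,
    Finset.sum_eq_zero fun j _ => by rw [hrow, mul_zero, zero_mul]]
  simp only [Fin.succ_zero_eq_one, hminor, Fin.val_zero, Fin.val_one, pow_zero, pow_one, one_mul,
    neg_mul, Fin.succAbove_zero, add_zero]
  ring

namespace Matrix

-- Only the products of opposite off-diagonal entries enter the determinant.
structure IsTridiagonal {R : Type*} [CommRing R] {n : ℕ} (a b : R)
    (T : Matrix (Fin n) (Fin n) R) : Prop where
  diag_eq : ∀ i, T i i = a
  mul_adj : ∀ i j : Fin n, (i : ℕ) + 1 = j → T i j * T j i = b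
  eq_zero : ∀ i j : Fin n, (i : ℕ) + 1 < j ∨ (j : ℕ) + 1 < i → T i j = 0

namespace IsTridiagonal

variable {R : Type*} [CommRing R] {a b : R} {n : ℕ}

theorem submatrix_succ {T : Matrix (Fin (n + 1)) (Fin (n + 1)) R} (hT : IsTridiagonal a b T) :
    IsTridiagonal a b (T.submatrix Fin.succ Fin.succ) where
  diag_eq i := hT.diag_eq i.succ
  mul_adj i j h := hT.mul_adj i.succ j.succ (by simpa using h)
  eq_zero i j h := hT.eq_zero i.succ j.succ (by simpa using h)

theorem det_eq {T : Matrix (Fin (n + 2)) (Fin (n + 2)) R} (hT : IsTridiagonal a b T) :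
    T.det = a * (T.submatrix Fin.succ Fin.succ).det
      - b * ((T.submatrix Fin.succ Fin.succ).submatrix Fin.succ Fin.succ).det := by
  rw [det_eq_of_head_tridiagonal T (fun j => hT.eq_zero _ _ (by simp))
    (fun i => hT.eq_zero _ _ (by simp)), hT.diag_eq, hT.mul_adj 0 1 rfl]

theorem det_eq_geom_sum {x : R} : ∀ {n : ℕ} {T : Matrix (Fin n) (Fin n) R},
    IsTridiagonal (x + 1) x T → T.det = ∑ i ∈ Finset.range (n + 1), x ^ i
  | 0, T, _ => by simp
  | 1, T, hT => by simp [hT.diag_eq, Finset.sum_range_succ, add_comm]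
  | n + 2, T, hT => by
    rw [hT.det_eq, det_eq_geom_sum hT.submatrix_succ,
      det_eq_geom_sum hT.submatrix_succ.submatrix_succ]
    simp only [Finset.sum_range_succ]
    ring

end IsTridiagonal

end Matrix

theorem isTridiagonal_pathGraph {R : Type*} [CommRing R] {n : ℕ} {L : List (Fin n)}
    (hL : IsEnum L) :
    IsTridiagonal (X + 1) X ((X - 1 : R[X]) •
      ((cartanOf R (SimpleGraph.pathGraph n)).unitriangularPart L).map C
        + (cartanOf R (SimpleGraph.pathGraph n)).map C) where
  diag_eq i := by
    simp only [Matrix.add_apply, Matrix.smul_apply, map_apply, unitriangularPart, cartanOf, if_pos,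
      smul_eq_mul, map_one, mul_one, map_ofNat C 2]
    ring
  mul_adj i j h := by
    have hij : i ≠ j := fun e => by simp [e] at h
    have hadj : (SimpleGraph.pathGraph n).Adj i j := by simp [SimpleGraph.pathGraph_adj, h]
    have hswap := hL.1.pair_sublist_swap_iff (hL.2 i) (hL.2 j) hij
    by_cases hprec : [i, j].Sublist L <;>
      simp [unitriangularPart, cartanOf, hij, hij.symm, hadj, hadj.symm, hswap, hprec]
  eq_zero i j h := by
    have hij : i ≠ j := fun e => by simp [e] at h
    have hnadj : ¬ (SimpleGraph.pathGraph n).Adj i j := by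
      simp only [SimpleGraph.pathGraph_adj, not_or]
      omega
    simp [unitriangularPart, cartanOf, hij, hnadj]

/-- The characteristic polynomial of the Coxeter transformation of the Dynkin diagram
`Aₙ` (the path graph on `n` vertices), taken with respect to any ordering of the simple
reflections, is `λⁿ + λⁿ⁻¹ + ⋯ + λ + 1 = (λⁿ⁺¹ − 1)/(λ − 1)`. -/
theorem charpoly_coxeter_A (n : ℕ) (L : List (Fin n)) (hL : IsEnum L) :
    (coxeterOf ℚ (cartanOf ℚ (SimpleGraph.pathGraph n)) L).charpoly
      = ∑ i ∈ Finset.range (n + 1), X ^ i ∧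
    (X - 1) * ∑ i ∈ Finset.range (n + 1), (X : ℚ[X]) ^ i = X ^ (n + 1) - 1 :=
  ⟨by rw [charpoly_coxeterOf _ hL, (isTridiagonal_pathGraph hL).det_eq_geom_sum],
    mul_geom_sum X (n + 1)⟩
end

section
/- The spectral radius of the polynomial family χ(T₂,₃,ᵣ)(λ) = λ^{r+3} + λ^{r+2} − (λ³ + λ⁴ + ⋯ + λʳ) + λ + 1 converges, as r → ∞, to the real root of λ³ − λ − 1 = 0, namely the plastic number ∛(1/2 + √(23/108)) + ∛(1/2 − √(23/108)) ≈ 1.324717. -/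
/-!
Multiplying by `y - 1` telescopes the geometric sum in `χ(T₂,₃,ᵣ)`:
`(y - 1) χ(T₂,₃,ᵣ)(y) = y^{r+1} (y³ - y - 1) + (y³ + y² - 1)`.
For `y > 1` the second summand is positive, so `χ(T₂,₃,ᵣ)` has no root `y ≥ a`, where `a` is
the real root of `y³ - y - 1`, while for `1 < y < a` the first summand is negative and eventually
dominates, making `χ(T₂,₃,ᵣ)(y) < 0`. By the intermediate value theorem the largest real root
therefore lies in `(y, a)` for all large `r`. That the explicit expression is the root of
`y³ - y - 1` is Cardano's formula.
-/

open Polynomial Filter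

noncomputable section

/-- The characteristic polynomial of the Coxeter transformation of the diagram `T₂,₃,ᵣ`:
`χ(T₂,₃,ᵣ)(λ) = λ^{r+3} + λ^{r+2} − (λ³ + λ⁴ + ⋯ + λʳ) + λ + 1`. -/
def chiT23 (r : ℕ) : Polynomial ℝ :=
  X ^ (r + 3) + X ^ (r + 2) - (∑ i ∈ Finset.Icc 3 r, X ^ i) + X + 1

open Topology

theorem add_pow_three_add_mul_add_eq_zero {R : Type*} [CommRing R] {p q u v : R}
    (hcubes : u ^ 3 + v ^ 3 = -q) (hprod : 3 * (u * v) = -p) :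
    (u + v) ^ 3 + p * (u + v) + q = 0 := by
  linear_combination hcubes + (u + v) * hprod

theorem plastic_cardano :
    let a := ((1 : ℝ) / 2 + Real.sqrt (23 / 108)) ^ ((1 : ℝ) / 3)
      + ((1 : ℝ) / 2 - Real.sqrt (23 / 108)) ^ ((1 : ℝ) / 3)
    a ^ 3 - a - 1 = 0 := by
  set s := Real.sqrt (23 / 108)
  have hs2 : s ^ 2 = 23 / 108 := Real.sq_sqrt (by norm_num)
  have hs0 : 0 ≤ s := Real.sqrt_nonneg _
  have hs : s < 1 / 2 := by nlinarith
  have hthird : (1 : ℝ) / 3 = ((3 : ℕ) : ℝ)⁻¹ := by norm_num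
  have hcube : ∀ t : ℝ, 0 ≤ t → (t ^ ((1 : ℝ) / 3)) ^ 3 = t := fun t ht => by
    rw [hthird]; exact Real.rpow_inv_natCast_pow ht three_ne_zero
  have hprod : (1 / 2 + s) ^ ((1 : ℝ) / 3) * (1 / 2 - s) ^ ((1 : ℝ) / 3) = 1 / 3 := by
    rw [← Real.mul_rpow (by linarith) (by linarith),
      show (1 / 2 + s) * (1 / 2 - s) = (1 / 3 : ℝ) ^ 3 by linear_combination -hs2, hthird,
      Real.pow_rpow_inv_natCast (by norm_num) three_ne_zero]
  have := add_pow_three_add_mul_add_eq_zero (p := -1) (q := -1)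
    (u := (1 / 2 + s) ^ ((1 : ℝ) / 3)) (v := (1 / 2 - s) ^ ((1 : ℝ) / 3))
    (by rw [hcube _ (by linarith), hcube _ (by linarith)]; ring) (by rw [hprod]; ring)
  linear_combination this

section PlasticCubic

variable {a : ℝ}

theorem one_lt_of_cube_sub_self_sub_one_eq_zero (ha : a ^ 3 - a - 1 = 0) : 1 < a := by
  nlinarith [sq_nonneg (a - 1), sq_nonneg (a + 1), sq_nonneg a]

/-- The quadratic cofactor has discriminant `4 - 3a² < 0`. -/
theorem cube_sub_self_sub_one_eq_mul (ha : a ^ 3 - a - 1 = 0) (x : ℝ) :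
    x ^ 3 - x - 1 = (x - a) * (x ^ 2 + a * x + a ^ 2 - 1) ∧ 0 < x ^ 2 + a * x + a ^ 2 - 1 := by
  have h1 := one_lt_of_cube_sub_self_sub_one_eq_zero ha
  have h43 : 4 < 3 * a ^ 2 := by nlinarith
  exact ⟨by linear_combination ha, by nlinarith [sq_nonneg (x + a / 2)]⟩

theorem cube_sub_self_sub_one_pos_of_lt (ha : a ^ 3 - a - 1 = 0) {x : ℝ} (hx : a < x) :
    0 < x ^ 3 - x - 1 := by
  obtain ⟨hfac, hpos⟩ := cube_sub_self_sub_one_eq_mul ha x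
  rw [hfac]; exact mul_pos (sub_pos.2 hx) hpos

theorem cube_sub_self_sub_one_neg_of_lt (ha : a ^ 3 - a - 1 = 0) {x : ℝ} (hx : x < a) :
    x ^ 3 - x - 1 < 0 := by
  obtain ⟨hfac, hpos⟩ := cube_sub_self_sub_one_eq_mul ha x
  rw [hfac]; exact mul_neg_of_neg_of_pos (sub_neg.2 hx) hpos

end PlasticCubic

theorem tendsto_csSup_of_eventually_le {ι α : Type*} [ConditionallyCompleteLinearOrder α]
    [TopologicalSpace α] [OrderTopology α] [NoMinOrder α] {l : Filter ι} {S : ι → Set α}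
    {a : α} (hle : ∀ᶠ i in l, ∀ x ∈ S i, x ≤ a)
    (hgt : ∀ b < a, ∀ᶠ i in l, ∃ x ∈ S i, b < x) :
    Tendsto (fun i => sSup (S i)) l (𝓝 a) := by
  rw [tendsto_order]
  refine ⟨fun b hb => ?_, fun b hb => ?_⟩
  · filter_upwards [hle, hgt b hb] with i hi ⟨x, hx, hbx⟩
    exact hbx.trans_le (le_csSup ⟨a, hi⟩ hx)
  · obtain ⟨c, hc⟩ := exists_lt a
    filter_upwards [hle, hgt c hc] with i hi ⟨x, hx, _⟩
    exact (csSup_le ⟨x, hx⟩ hi).trans_lt hb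

theorem sub_one_mul_eval_chiT23 {r : ℕ} (hr : 2 ≤ r) (y : ℝ) :
    (y - 1) * (chiT23 r).eval y = y ^ (r + 1) * (y ^ 3 - y - 1) + (y ^ 3 + y ^ 2 - 1) := by
  have hsum : ∑ i ∈ Finset.Icc 3 r, y ^ i
      = ∑ i ∈ Finset.range (r + 1), y ^ i - ∑ i ∈ Finset.range 3, y ^ i := by
    rw [← Finset.Ico_add_one_right_eq_Icc, Finset.sum_Ico_eq_sub _ (by omega)]
  simp only [chiT23, eval_add, eval_sub, eval_pow, eval_X, eval_one, eval_finsetSum, hsum]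
  linear_combination geom_sum_mul y 3 - geom_sum_mul y (r + 1)

section Convergence

variable {a : ℝ}

theorem eval_chiT23_pos_of_le (ha : a ^ 3 - a - 1 = 0) {r : ℕ} (hr : 2 ≤ r) {x : ℝ}
    (hx : a ≤ x) :
    0 < (chiT23 r).eval x := by
  have hx1 : 1 < x := (one_lt_of_cube_sub_self_sub_one_eq_zero ha).trans_le hx
  have hcubic : 0 ≤ x ^ 3 - x - 1 := by
    rcases hx.eq_or_lt with rfl | hlt
    · exact ha.ge
    · exact (cube_sub_self_sub_one_pos_of_lt ha hlt).le
  have hkey := sub_one_mul_eval_chiT23 hr x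
  have hpos : 0 < (x - 1) * (chiT23 r).eval x := by
    rw [hkey]; nlinarith [pow_pos (zero_lt_one.trans hx1) (r + 1)]
  exact pos_of_mul_pos_right hpos (sub_pos.2 hx1).le

theorem eventually_eval_chiT23_neg (ha : a ^ 3 - a - 1 = 0) {x : ℝ} (hx1 : 1 < x)
    (hxa : x < a) :
    ∀ᶠ r in atTop, (chiT23 r).eval x < 0 := by
  have hneg : 0 < -(x ^ 3 - x - 1) := neg_pos.2 (cube_sub_self_sub_one_neg_of_lt ha hxa)
  have hpow : Tendsto (fun r : ℕ => x ^ (r + 1)) atTop atTop :=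
    (tendsto_pow_atTop_atTop_of_one_lt hx1).comp (tendsto_add_atTop_nat 1)
  filter_upwards [hpow.eventually_gt_atTop ((x ^ 3 + x ^ 2 - 1) / -(x ^ 3 - x - 1)),
    eventually_ge_atTop 2] with r hlarge hr
  have hdom := (div_lt_iff₀ hneg).mp hlarge
  have hkey := sub_one_mul_eval_chiT23 hr x
  have : (x - 1) * (chiT23 r).eval x < 0 := by rw [hkey]; linarith
  exact neg_of_mul_neg_right this (sub_pos.2 hx1).le

theorem eventually_exists_root_chiT23_gt (ha : a ^ 3 - a - 1 = 0) {b : ℝ} (hb : b < a) :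
    ∀ᶠ r in atTop, ∃ z ∈ {x : ℝ | (chiT23 r).IsRoot x}, b < z := by
  have ha1 := one_lt_of_cube_sub_self_sub_one_eq_zero ha
  set x := max b ((1 + a) / 2)
  have hx1 : 1 < x := lt_max_of_lt_right (by linarith)
  have hxa : x < a := max_lt hb (by linarith)
  filter_upwards [eventually_eval_chiT23_neg ha hx1 hxa, eventually_ge_atTop 2] with r hneg hr
  obtain ⟨z, hz, hroot⟩ := intermediate_value_Ioo hxa.le (chiT23 r).continuous.continuousOn
    ⟨hneg, eval_chiT23_pos_of_le ha hr le_rfl⟩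
  exact ⟨z, hroot, (le_max_left b _).trans_lt hz.1⟩

end Convergence

/-- The spectral radius (largest real root) of `χ(T₂,₃,ᵣ)` converges, as `r → ∞`, to the
real root of `λ³ − λ − 1 = 0`, namely the plastic number
`∛(1/2 + √(23/108)) + ∛(1/2 − √(23/108)) ≈ 1.324717`. -/
theorem spectralRadius_T23r_tendsto (a : ℝ)
    (ha : a = ((1 : ℝ) / 2 + Real.sqrt (23 / 108)) ^ ((1 : ℝ) / 3)
            + ((1 : ℝ) / 2 - Real.sqrt (23 / 108)) ^ ((1 : ℝ) / 3)) :
    a ^ 3 - a - 1 = 0 ∧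
    Tendsto (fun r : ℕ => sSup {x : ℝ | (chiT23 r).IsRoot x}) atTop (nhds a) := by
  have hcubic : a ^ 3 - a - 1 = 0 := ha ▸ plastic_cardano
  refine ⟨hcubic, tendsto_csSup_of_eventually_le ?_ fun b hb =>
    eventually_exists_root_chiT23_gt hcubic hb⟩
  filter_upwards [eventually_ge_atTop 2] with r hr x hx
  by_contra! hax
  exact (eval_chiT23_pos_of_le hcubic hr hax.le).ne' hx

end
end
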